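/- arXiv:1001.2582 — 2 statements merged into one kernel-verified Lean document; each statement's English description precedes it below -/
import Mathlib

section
/- Let H be a finite set with |H| = N ≥ 4, let (X_t)_{t≥1} be i.i.d. random variables each uniformly distributed on H, and let c, a₁, a₂, a₃ ∈ H be four distinct elements. Then the expected time until either c first appears or all of a₁, a₂, a₃ have appeared satisfies E[min(τ_c, σ_{{a₁,a₂,a₃}})] = (3/4)·N. (This is the average decoding delay d^(2,4) of the first-to-complete scheme using alignment sets of sizes 2 and 4.) -/
/-!
Off a null set every element of `H` eventually appears, and then `min (τ_c, σ_A) > t` exactly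
when `c` and at least one `a ∈ A` are both missing from the first `t` draws. Since a fixed
`k`-set is missed by `t` independent uniform draws with probability `(1 - k/N)^t`,
inclusion–exclusion over the nonempty `u ⊆ A` and summing the tails give
`E[min (τ_c, σ_A)] = ∑_{∅ ≠ u ⊆ A} (-1)^(|u|+1) N / (|u| + 1) = |A| N / (|A| + 1)`,
which is `3N/4` for `|A| = 3`.
-/

open MeasureTheory ProbabilityTheory

/-- The collection time `σ_A`: the smallest time `t ≥ 1` such that every element of `A`
has appeared among `X_1, …, X_t` (with the convention `sInf ∅ = 0`). -/
noncomputable def collectTime {Ω H : Type*} (X : ℕ → Ω → H) (A : Set H) (ω : Ω) : ℕ :=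
  sInf {t : ℕ | ∀ a ∈ A, ∃ s, 1 ≤ s ∧ s ≤ t ∧ X s ω = a}

/-- The first hitting time `τ_c`: the first time `t ≥ 1` with `X_t = c`. -/
noncomputable def hitTime {Ω H : Type*} (X : ℕ → Ω → H) (c : H) (ω : Ω) : ℕ :=
  collectTime X {c} ω

open Finset

theorem Nat.lt_sInf_iff_of_isUpperSet {s : Set ℕ} (hs : IsUpperSet s) {t : ℕ} :
    t < sInf s ↔ s.Nonempty ∧ t ∉ s := by
  refine ⟨fun h => ⟨Nat.nonempty_of_pos_sInf (by omega), Nat.notMem_of_lt_sInf h⟩, ?_⟩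
  rintro ⟨hne, ht⟩
  by_contra! h
  exact ht (hs h (Nat.sInf_mem hne))

theorem sum_range_choose_mul_neg_one_pow_div_succ (m : ℕ) :
    ∑ k ∈ range (m + 1), (m.choose k : ℝ) * (-1) ^ k / (k + 1) = 1 / (m + 1) := by
  have hrow : ∑ k ∈ range (m + 2), (-1 : ℝ) ^ k * (m + 1).choose k = 0 := by
    exact_mod_cast Int.alternating_sum_range_choose_of_ne (n := m + 1) (by omega)
  rw [sum_range_succ'] at hrow
  -- `(m + 1) * C(m, k) = C(m + 1, k + 1) * (k + 1)` turns the sum into an alternating row sum.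
  have hterm : ∀ k, (m.choose k : ℝ) * (-1) ^ k / (k + 1)
      = -((-1 : ℝ) ^ (k + 1) * (m + 1).choose (k + 1)) / (m + 1) := by
    intro k
    have : ((m + 1) * m.choose k : ℝ) = (m + 1).choose (k + 1) * (k + 1) := by
      exact_mod_cast Nat.add_one_mul_choose_eq m k
    field_simp
    linear_combination (-1 : ℝ) ^ k * this
  simp_rw [hterm, ← sum_div, sum_neg_distrib]
  simp only [pow_zero, Nat.choose_zero_right, Nat.cast_one, mul_one] at hrow
  rw [eq_neg_of_add_eq_zero_left hrow]
  ring

theorem sum_powerset_nonempty_neg_one_pow_div_succ {α : Type*} (A : Finset α) :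
    ∑ u ∈ A.powerset with u.Nonempty, (-1 : ℝ) ^ (#u + 1) / (#u + 1) = #A / (#A + 1) := by
  have hempty : A.powerset.filter (fun u => ¬ u.Nonempty) = {∅} := by
    ext u
    simp +contextual [Finset.not_nonempty_iff_eq_empty]
  have hall := sum_powerset_apply_card (fun k => (-1 : ℝ) ^ (k + 1) / (k + 1)) (x := A)
  rw [← sum_filter_add_sum_filter_not _ Finset.Nonempty, hempty] at hall
  have hrange := sum_range_choose_mul_neg_one_pow_div_succ #A
  have hneg : ∑ k ∈ range (#A + 1), ((#A).choose k : ℝ) * ((-1) ^ (k + 1) / (k + 1))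
      = -(1 / (#A + 1)) := by
    rw [← hrange, ← sum_neg_distrib]
    exact sum_congr rfl fun k _ => by ring
  simp only [sum_singleton, card_empty, nsmul_eq_mul, hneg] at hall
  field_simp at hall ⊢
  linarith

theorem hasSum_one_sub_div_pow {k n : ℝ} (hk : 0 < k) (hkn : k ≤ n) :
    HasSum (fun t : ℕ => (1 - k / n) ^ t) (n / k) := by
  have hn : 0 < n := hk.trans_le hkn
  convert hasSum_geometric_of_lt_one (r := 1 - k / n) ?_ ?_ using 1
  · rw [sub_sub_cancel, inv_div]
  · rw [sub_nonneg, div_le_one hn]; exact hkn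
  · linarith [div_pos hk hn]

section LayerCake

variable {Ω : Type*} [MeasurableSpace Ω] {μ : Measure Ω}

theorem lintegral_natCast_eq_tsum_measure_lt {f : Ω → ℕ} (hf : Measurable f) :
    ∫⁻ ω, (f ω : ENNReal) ∂μ = ∑' t : ℕ, μ {ω | t < f ω} := by
  have hlt (t : ℕ) : MeasurableSet {ω | t < f ω} := hf measurableSet_Ioi
  have hcount (ω : Ω) : (f ω : ENNReal) = ∑' t : ℕ, {ω | t < f ω}.indicator 1 ω := by
    rw [tsum_eq_sum (s := range (f ω)) (by simp),
      sum_congr rfl fun t ht => Set.indicator_of_mem (s := {ω | t < f ω}) (mem_range.1 ht) 1]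
    simp
  simp_rw [hcount]
  rw [lintegral_tsum fun t => (measurable_one.indicator (hlt t)).aemeasurable]
  simp_rw [lintegral_indicator_one (hlt _)]

theorem integral_natCast_eq_of_hasSum_measureReal_lt [IsFiniteMeasure μ] {f : Ω → ℕ}
    (hf : Measurable f) {a : ℝ} (ha : HasSum (fun t => μ.real {ω | t < f ω}) a) :
    ∫ ω, (f ω : ℝ) ∂μ = a := by
  rw [integral_eq_lintegral_of_nonneg_ae (Filter.Eventually.of_forall fun _ => Nat.cast_nonneg _)
    (measurable_from_top.comp hf).aestronglyMeasurable]
  simp_rw [ENNReal.ofReal_natCast]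
  rw [lintegral_natCast_eq_tsum_measure_lt hf]
  simp_rw [← ofReal_measureReal (measure_ne_top μ _)]
  rw [← ENNReal.ofReal_tsum_of_nonneg (fun _ => measureReal_nonneg) ha.summable,
    ENNReal.toReal_ofReal (tsum_nonneg fun _ => measureReal_nonneg), ha.tsum_eq]

end LayerCake

section Draws

variable {Ω H : Type*} {X : ℕ → Ω → H}

def unseen (X : ℕ → Ω → H) (t : ℕ) (b : H) : Set Ω :=
  {ω | ∀ s ∈ Finset.Icc 1 t, X s ω ≠ b}

theorem unseen_anti (b : H) : Antitone fun t => unseen X t b :=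
  fun _ _ huv _ hω s hs => hω s (Icc_subset_Icc_right huv hs)

theorem notMem_unseen_iff {t : ℕ} {b : H} {ω : Ω} :
    ω ∉ unseen X t b ↔ ∃ s, 1 ≤ s ∧ s ≤ t ∧ X s ω = b := by
  simp [unseen]

theorem lt_collectTime_iff {A : Set H} {t : ℕ} {ω : Ω} :
    t < collectTime X A ω ↔ (∃ u, ∀ a ∈ A, ω ∉ unseen X u a) ∧ ∃ a ∈ A, ω ∈ unseen X t a := by
  have hsInf : collectTime X A ω = sInf {u | ∀ a ∈ A, ω ∉ unseen X u a} := by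
    simp only [collectTime, notMem_unseen_iff]
  have hup : IsUpperSet {u | ∀ a ∈ A, ω ∉ unseen X u a} :=
    fun u v huv hu a ha hv => hu a ha (unseen_anti a huv hv)
  rw [hsInf, Nat.lt_sInf_iff_of_isUpperSet hup]
  simp [Set.Nonempty]

theorem lt_collectTime_iff_of_finite {A : Set H} (hA : A.Finite) {t : ℕ} {ω : Ω}
    (hseen : ∀ a ∈ A, ∃ u, ω ∉ unseen X u a) :
    t < collectTime X A ω ↔ ∃ a ∈ A, ω ∈ unseen X t a := by
  refine lt_collectTime_iff.trans (and_iff_right_of_imp fun _ => ?_)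
  refine ((Filter.eventually_all_finite hA).2 fun a ha => ?_).exists (f := Filter.atTop)
  obtain ⟨u, hu⟩ := hseen a ha
  exact Filter.eventually_atTop.2 ⟨u, fun v hv h => hu (unseen_anti a hv h)⟩

variable [MeasurableSpace Ω] [MeasurableSpace H] [MeasurableSingletonClass H]

theorem measurableSet_unseen (hmeas : ∀ t, Measurable (X t)) (t : ℕ) (b : H) :
    MeasurableSet (unseen X t b) := by
  simp only [unseen, Set.ofPred_forall]
  exact MeasurableSet.biInter (Set.to_countable _) fun s _ =>
    (hmeas s) (measurableSet_singleton b).compl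

theorem measurable_collectTime [Countable H] (hmeas : ∀ t, Measurable (X t)) (A : Set H) :
    Measurable (collectTime X A) := by
  refine measurable_of_Ioi fun t => ?_
  have hpre : collectTime X A ⁻¹' Set.Ioi t
      = (⋃ u, ⋂ a ∈ A, (unseen X u a)ᶜ) ∩ ⋃ a ∈ A, unseen X t a := by
    ext ω
    simp [lt_collectTime_iff]
  rw [hpre]
  have hm := measurableSet_unseen hmeas
  exact (MeasurableSet.iUnion fun u =>
    .biInter (Set.to_countable A) fun a _ => (hm u a).compl).inter
      (.biUnion (Set.to_countable A) fun a _ => hm t a)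

end Draws

section UniformDraws

variable {Ω H : Type*} [MeasurableSpace Ω] {μ : Measure Ω} [IsProbabilityMeasure μ]
  [MeasurableSpace H] [MeasurableSingletonClass H] {N : ℕ} {X : ℕ → Ω → H}

theorem measureReal_preimage_compl_finset (hmeas : ∀ t, Measurable (X t))
    (hunif : ∀ t, ∀ c : H, μ {ω | X t ω = c} = (N : ENNReal)⁻¹) (s : ℕ) (B : Finset H) :
    μ.real (X s ⁻¹' (↑B)ᶜ) = 1 - #B / N := by
  have hsingle (b : H) : μ.real (X s ⁻¹' {b}) = (N : ℝ)⁻¹ := by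
    simp [measureReal_def, Set.preimage, hunif]
  rw [Set.preimage_compl, measureReal_compl ((hmeas s) B.measurableSet), probReal_univ,
    ← sum_measureReal_preimage_singleton B fun b _ => (hmeas s) (measurableSet_singleton b)]
  simp [hsingle, div_eq_mul_inv]

theorem measureReal_biInter_unseen (hmeas : ∀ t, Measurable (X t)) (hindep : iIndepFun X μ)
    (hunif : ∀ t, ∀ c : H, μ {ω | X t ω = c} = (N : ENNReal)⁻¹) (t : ℕ) (B : Finset H) :
    μ.real (⋂ b ∈ B, unseen X t b) = (1 - #B / N) ^ t := by
  have hset : ⋂ b ∈ B, unseen X t b = ⋂ s ∈ Finset.Icc 1 t, X s ⁻¹' (↑B)ᶜ := by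
    ext ω
    simp only [unseen, Set.mem_iInter, Set.mem_ofPred_eq, Set.mem_preimage, Set.mem_compl_iff,
      mem_coe]
    exact ⟨fun h s hs hb => h _ hb s hs rfl, fun h b hb s hs hsb => h s hs (hsb ▸ hb)⟩
  rw [hset, measureReal_def,
    hindep.meas_biInter fun s _ => ⟨_, B.measurableSet.compl, rfl⟩, ENNReal.toReal_prod]
  simp_rw [← measureReal_def, measureReal_preimage_compl_finset hmeas hunif]
  simp

theorem ae_exists_notMem_unseen (hN : 0 < N) (hmeas : ∀ t, Measurable (X t))
    (hindep : iIndepFun X μ) (hunif : ∀ t, ∀ c : H, μ {ω | X t ω = c} = (N : ENNReal)⁻¹)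
    (b : H) : ∀ᵐ ω ∂μ, ∃ u, ω ∉ unseen X u b := by
  have hq : (1 - 1 / N : ℝ) < 1 := by simp [hN]
  have hq0 : (0 : ℝ) ≤ 1 - 1 / N := by
    rw [sub_nonneg, div_le_one (by exact_mod_cast hN)]
    exact_mod_cast hN
  have hbound (u : ℕ) : μ.real (⋂ v, unseen X v b) ≤ (1 - 1 / N) ^ u := by
    have hu := measureReal_biInter_unseen hmeas hindep hunif u {b}
    simp only [set_biInter_singleton, card_singleton, Nat.cast_one] at hu
    exact (measureReal_mono (Set.iInter_subset _ u)).trans_eq hu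
  have hzero : μ.real (⋂ v, unseen X v b) = 0 :=
    le_antisymm (ge_of_tendsto' (tendsto_pow_atTop_nhds_zero_of_lt_one hq0 hq) hbound)
      measureReal_nonneg
  rw [measureReal_eq_zero_iff] at hzero
  rw [ae_iff]
  convert hzero using 2
  ext ω
  simp

theorem measureReal_lt_min_hitTime_collectTime (hN : 0 < N) (hmeas : ∀ t, Measurable (X t))
    (hindep : iIndepFun X μ) (hunif : ∀ t, ∀ c : H, μ {ω | X t ω = c} = (N : ENNReal)⁻¹)
    {c : H} {A : Finset H} (hc : c ∉ A) (t : ℕ) :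
    μ.real {ω | t < min (hitTime X c ω) (collectTime X A ω)}
      = ∑ u ∈ A.powerset with u.Nonempty, (-1 : ℝ) ^ (#u + 1) * (1 - (#u + 1) / N) ^ t := by
  classical
  have hseen := ae_exists_notMem_unseen hN hmeas hindep hunif (μ := μ)
  have hae : {ω | t < min (hitTime X c ω) (collectTime X A ω)}
      =ᵐ[μ] ⋃ a ∈ A, unseen X t c ∩ unseen X t a := by
    have hseenA : ∀ᵐ ω ∂μ, ∀ a ∈ A, ∃ u, ω ∉ unseen X u a :=
      (Filter.eventually_all_finset A).2 fun a _ => hseen a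
    refine Filter.eventuallyEq_set.2 ?_
    filter_upwards [hseen c, hseenA] with ω hωc hωA
    rw [lt_min_iff, hitTime,
      lt_collectTime_iff_of_finite (Set.finite_singleton c) (by simpa using hωc),
      lt_collectTime_iff_of_finite A.finite_toSet hωA]
    simp
  rw [measureReal_congr hae, measureReal_biUnion_eq_sum_powerset fun a _ =>
    (measurableSet_unseen hmeas t c).inter (measurableSet_unseen hmeas t a)]
  refine sum_congr rfl fun u hu => ?_
  obtain ⟨hsub, hne⟩ : u ⊆ A ∧ u.Nonempty := by simpa using hu
  have hinter := Set.inter_biInter (coe_nonempty.2 hne) (unseen X t) (unseen X t c)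
  simp only [mem_coe] at hinter
  rw [hinter, ← set_biInter_insert, measureReal_biInter_unseen hmeas hindep hunif,
    card_insert_of_notMem fun h => hc (hsub h)]
  push_cast
  ring

theorem integral_min_hitTime_collectTime [Fintype H] (hcard : Fintype.card H = N)
    (hmeas : ∀ t, Measurable (X t)) (hindep : iIndepFun X μ)
    (hunif : ∀ t, ∀ c : H, μ {ω | X t ω = c} = (N : ENNReal)⁻¹)
    {c : H} {A : Finset H} (hc : c ∉ A) :
    ∫ ω, (min (hitTime X c ω) (collectTime X A ω) : ℝ) ∂μ = #A * N / (#A + 1) := by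
  classical
  have hAN : #A + 1 ≤ N := hcard ▸ card_insert_of_notMem hc ▸ card_le_univ _
  have hmin : Measurable fun ω => min (hitTime X c ω) (collectTime X A ω) :=
    (measurable_collectTime hmeas _).min (measurable_collectTime hmeas _)
  simp_rw [← Nat.cast_min]
  refine integral_natCast_eq_of_hasSum_measureReal_lt hmin ?_
  simp_rw [measureReal_lt_min_hitTime_collectTime (by omega) hmeas hindep hunif hc]
  have hsum : (#A * N / (#A + 1) : ℝ)
      = ∑ u ∈ A.powerset with u.Nonempty, (-1 : ℝ) ^ (#u + 1) * (N / (#u + 1)) := by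
    rw [mul_div_right_comm, ← sum_powerset_nonempty_neg_one_pow_div_succ, sum_mul]
    exact sum_congr rfl fun u _ => by ring
  rw [hsum]
  refine hasSum_sum fun u hu => (hasSum_one_sub_div_pow ?_ ?_).mul_left _
  · positivity
  · have : #u ≤ #A := card_le_card (mem_powerset.1 (mem_filter.1 hu).1)
    exact_mod_cast (by omega : #u + 1 ≤ N)

end UniformDraws

theorem expected_delay_first_to_complete_2_4_general
    {Ω : Type*} [MeasurableSpace Ω] (μ : Measure Ω) [IsProbabilityMeasure μ]
    {H : Type*} [Fintype H] [MeasurableSpace H] [MeasurableSingletonClass H]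
    (N : ℕ) (hcard : Fintype.card H = N)
    (X : ℕ → Ω → H) (hmeas : ∀ t, Measurable (X t))
    (hindep : iIndepFun X μ)
    (hunif : ∀ t, ∀ c : H, μ {ω | X t ω = c} = (N : ENNReal)⁻¹)
    (c a₁ a₂ a₃ : H)
    (h₁₂ : a₁ ≠ a₂) (h₁₃ : a₁ ≠ a₃) (h₂₃ : a₂ ≠ a₃)
    (hc₁ : c ≠ a₁) (hc₂ : c ≠ a₂) (hc₃ : c ≠ a₃) :
    ∫ ω, (min (hitTime X c ω) (collectTime X {a₁, a₂, a₃} ω) : ℝ) ∂μ = (3 / 4) * N := by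
  classical
  have hc : c ∉ ({a₁, a₂, a₃} : Finset H) := by simp [hc₁, hc₂, hc₃]
  have hA : #{a₁, a₂, a₃} = 3 := card_eq_three.2 ⟨a₁, a₂, a₃, h₁₂, h₁₃, h₂₃, rfl⟩
  have h := integral_min_hitTime_collectTime hcard hmeas hindep hunif hc
  rw [hA, coe_insert, coe_insert, coe_singleton] at h
  rw [h]
  ring

/-- For i.i.d. uniform draws from a finite set `H` of size `N ≥ 4` and four distinct
elements `c, a₁, a₂, a₃ ∈ H`, the expected time until either `c` first appears or all
of `a₁, a₂, a₃` have appeared is `(3/4)·N`.  This is the average decoding delay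
`d^(2,4)` of the first-to-complete scheme with alignment sets of sizes 2 and 4. -/
theorem expected_delay_first_to_complete_2_4
    {Ω : Type*} [MeasurableSpace Ω] (μ : Measure Ω) [IsProbabilityMeasure μ]
    {H : Type*} [Fintype H] [MeasurableSpace H] [MeasurableSingletonClass H]
    (N : ℕ) (hN : 4 ≤ N) (hcard : Fintype.card H = N)
    (X : ℕ → Ω → H) (hmeas : ∀ t, Measurable (X t))
    (hindep : iIndepFun X μ)
    (hunif : ∀ t, ∀ c : H, μ {ω | X t ω = c} = (N : ENNReal)⁻¹)
    (c a₁ a₂ a₃ : H)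
    (h₁₂ : a₁ ≠ a₂) (h₁₃ : a₁ ≠ a₃) (h₂₃ : a₂ ≠ a₃)
    (hc₁ : c ≠ a₁) (hc₂ : c ≠ a₂) (hc₃ : c ≠ a₃) :
    ∫ ω, (min (hitTime X c ω) (collectTime X {a₁, a₂, a₃} ω) : ℝ) ∂μ = (3 / 4) * N :=
  expected_delay_first_to_complete_2_4_general μ N hcard X hmeas hindep hunif c a₁ a₂ a₃ h₁₂ h₁₃ h₂₃
    hc₁ hc₂ hc₃
end

section
/- For any positive integers a₁, …, a_r, the following integral identity holds: ∫₀¹ (1/(1−u)) · ∏_{i=1}^{r} (1 − u^{a_i}) du = Σ_{∅ ≠ U ⊆ {1,…,r}} (−1)^{1−|U|} · H_{Σ_{i∈U} a_i}, where H_n = Σ_{j=1}^{n} 1/j is the n-th harmonic number. (The integrand extends continuously to u = 1, and the integral is finite.) -/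
/-!
Expanding `∏ i, (1 - u ^ a i)` over subsets, and using that the signs `(-1) ^ (#U + 1)`
over the nonempty subsets sum to `1`, writes the integrand as
`∑ U, (-1) ^ (#U + 1) * (1 - u ^ a_U) / (1 - u)` with `a_U = ∑ i ∈ U, a i`.
Each quotient is the geometric sum `∑ j < a_U, u ^ j`, whose integral over `[0, 1]` is `H_{a_U}`.
-/

/-- The `n`-th harmonic number `H_n = ∑_{j=1}^n 1/j`, as a real number. -/
noncomputable def harm (n : ℕ) : ℝ := ∑ j ∈ Finset.range n, (1 : ℝ) / (j + 1)

open Finset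

namespace Finset

variable {ι R : Type*} [CommRing R]

theorem prod_one_sub_eq_sum_powerset [DecidableEq ι] (s : Finset ι) (f : ι → R) :
    ∏ i ∈ s, (1 - f i) = ∑ t ∈ s.powerset, (-1) ^ #t * ∏ i ∈ t, f i := by
  simp [prod_sub]

theorem prod_one_sub_eq_sum_nonempty_powerset {s : Finset ι} (hs : s.Nonempty) (f : ι → R) :
    ∏ i ∈ s, (1 - f i) =
      ∑ t ∈ s.powerset with t.Nonempty, (-1) ^ (#t + 1) * (1 - ∏ i ∈ t, f i) := by
  classical
  have hs1 : ∏ i ∈ s, (1 - (1 : R)) = 0 := prod_eq_zero hs.choose_spec (sub_self 1)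
  -- subtracting the vanishing product `∏ (1 - 1)` kills the term of the empty subset
  calc ∏ i ∈ s, (1 - f i) = ∏ i ∈ s, (1 - f i) - ∏ i ∈ s, (1 - (1 : R)) := by rw [hs1, sub_zero]
    _ = ∑ t ∈ s.powerset, (-1) ^ #t * (∏ i ∈ t, f i - ∏ i ∈ t, (1 : R)) := by
      simp only [prod_one_sub_eq_sum_powerset, ← sum_sub_distrib, mul_sub]
    _ = ∑ t ∈ s.powerset with t.Nonempty, (-1) ^ #t * (∏ i ∈ t, f i - ∏ i ∈ t, (1 : R)) := by
      refine (sum_filter_of_ne fun t _ ht => nonempty_iff_ne_empty.2 ?_).symm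
      rintro rfl
      simp at ht
    _ = _ := by
      refine sum_congr rfl fun t _ => ?_
      rw [prod_const_one, pow_succ]
      ring

end Finset

theorem one_div_one_sub_mul_one_sub_pow {K : Type*} [DivisionRing K] {x : K} (hx : x ≠ 1)
    (n : ℕ) : 1 / (1 - x) * (1 - x ^ n) = ∑ j ∈ range n, x ^ j := by
  rw [← mul_neg_geom_sum, one_div, inv_mul_cancel_left₀ (sub_ne_zero.2 hx.symm)]

theorem one_div_one_sub_mul_prod_one_sub_pow {ι K : Type*} [Field K] {s : Finset ι}
    (hs : s.Nonempty) (a : ι → ℕ) {x : K} (hx : x ≠ 1) :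
    1 / (1 - x) * ∏ i ∈ s, (1 - x ^ a i) =
      ∑ t ∈ s.powerset with t.Nonempty, (-1) ^ (#t + 1) * ∑ j ∈ range (∑ i ∈ t, a i), x ^ j := by
  simp only [prod_one_sub_eq_sum_nonempty_powerset hs, mul_sum, prod_pow_eq_pow_sum,
    mul_left_comm (1 / (1 - x)), one_div_one_sub_mul_one_sub_pow hx]

theorem integral_geom_sum_eq_harm (n : ℕ) :
    ∫ u in (0 : ℝ)..1, ∑ j ∈ range n, u ^ j = harm n := by
  rw [intervalIntegral.integral_finsetSum fun j _ => (continuous_pow j).intervalIntegrable 0 1]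
  simp [harm, integral_pow]

theorem integral_eq_inclusion_exclusion_harmonic_general
    (r : ℕ) (hr : 0 < r) (a : Fin r → ℕ) :
    ∫ u in (0 : ℝ)..1, (1 / (1 - u)) * ∏ i, (1 - u ^ a i) =
      ∑ U ∈ (Finset.univ : Finset (Fin r)).powerset.filter (fun U => U.Nonempty),
        (-1 : ℝ) ^ (U.card + 1) * harm (∑ i ∈ U, a i) := by
  have hne : (univ : Finset (Fin r)).Nonempty := univ_nonempty_iff.2 ⟨⟨0, hr⟩⟩
  calc ∫ u in (0 : ℝ)..1, (1 / (1 - u)) * ∏ i, (1 - u ^ a i)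
      = ∫ u in (0 : ℝ)..1, ∑ U ∈ univ.powerset with U.Nonempty,
          (-1) ^ (#U + 1) * ∑ j ∈ range (∑ i ∈ U, a i), u ^ j := by
        refine intervalIntegral.integral_congr_ae ?_
        filter_upwards [(Set.countable_singleton (1 : ℝ)).ae_notMem MeasureTheory.volume]
          with u hu _
        exact one_div_one_sub_mul_prod_one_sub_pow hne a hu
    _ = _ := by
        rw [intervalIntegral.integral_finsetSum fun U _ =>
          (by fun_prop : Continuous _).intervalIntegrable 0 1]
        simp only [intervalIntegral.integral_const_mul, integral_geom_sum_eq_harm]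

/-- For any positive integers `a₁, …, a_r`,
`∫₀¹ (1/(1−u)) · ∏_i (1 − u^{a_i}) du
  = ∑_{∅ ≠ U ⊆ {1,…,r}} (−1)^{1−|U|} · H_{∑_{i∈U} a_i}`,
where `H_n` is the `n`-th harmonic number.  (The integrand extends continuously to
`u = 1`, and the integral is finite.) -/
theorem integral_eq_inclusion_exclusion_harmonic
    (r : ℕ) (hr : 0 < r) (a : Fin r → ℕ) (ha : ∀ i, 0 < a i) :
    ∫ u in (0 : ℝ)..1, (1 / (1 - u)) * ∏ i, (1 - u ^ a i) =
      ∑ U ∈ (Finset.univ : Finset (Fin r)).powerset.filter (fun U => U.Nonempty),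
        (-1 : ℝ) ^ (U.card + 1) * harm (∑ i ∈ U, a i) :=
  integral_eq_inclusion_exclusion_harmonic_general r hr a
end
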